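/- Let H be an acceptable Hintikka set and F a closed term of type oτ. If (Π^τ F) ∈ H, then (F s) ∈ H for every closed term s of type τ. -/
import Mathlib


namespace HintikkaHOL

/-- Simple types over base types `o` (Booleans) and `i` (individuals). -/
inductive Ty : Type
  | o : Ty
  | i : Ty
  | arr : Ty → Ty → Ty
deriving DecidableEq

open Ty

/-- Typed de Bruijn variables. -/
inductive Var : List Ty → Ty → Type
  | vz {Γ τ} : Var (τ :: Γ) τ
  | vs {Γ σ τ} : Var Γ τ → Var (σ :: Γ) τ

/-- Terms of Church's type theory over a signature `S` of parameters,
with primitive equality `eq τ : τ → τ → o` as the only logical constant. -/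
inductive Tm (S : Ty → Type) : List Ty → Ty → Type
  | var {Γ τ} : Var Γ τ → Tm S Γ τ
  | par {Γ τ} : S τ → Tm S Γ τ
  | eq {Γ} (τ : Ty) : Tm S Γ (arr τ (arr τ o))
  | app {Γ a b} : Tm S Γ (arr a b) → Tm S Γ a → Tm S Γ b
  | lam {Γ a b} : Tm S (a :: Γ) b → Tm S Γ (arr a b)

variable {S : Ty → Type}

/-- Renamings. -/
abbrev Ren (Γ Δ : List Ty) : Type := ∀ τ, Var Γ τ → Var Δ τ

def Ren.lift {Γ Δ} (r : Ren Γ Δ) (σ : Ty) : Ren (σ :: Γ) (σ :: Δ)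
  | _, .vz => .vz
  | _, .vs w => .vs (r _ w)

def rename {Γ Δ} (r : Ren Γ Δ) : ∀ {τ}, Tm S Γ τ → Tm S Δ τ
  | _, .var v => .var (r _ v)
  | _, .par p => .par p
  | _, .eq τ => .eq τ
  | _, .app f a => .app (rename r f) (rename r a)
  | _, .lam b => .lam (rename (Ren.lift r _) b)

/-- Substitutions. -/
abbrev Sub (S : Ty → Type) (Γ Δ : List Ty) : Type := ∀ τ, Var Γ τ → Tm S Δ τ

def Sub.lift {Γ Δ} (s : Sub S Γ Δ) (σ : Ty) : Sub S (σ :: Γ) (σ :: Δ)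
  | _, .vz => .var .vz
  | _, .vs w => rename (fun _ u => Var.vs u) (s _ w)

def subst {Γ Δ} (s : Sub S Γ Δ) : ∀ {τ}, Tm S Γ τ → Tm S Δ τ
  | _, .var v => s _ v
  | _, .par p => .par p
  | _, .eq τ => .eq τ
  | _, .app f a => .app (subst s f) (subst s a)
  | _, .lam b => .lam (subst (Sub.lift s _) b)

/-- The substitution sending the outermost variable to `a`. -/
def Sub.single {Γ σ} (a : Tm S Γ σ) : Sub S (σ :: Γ) Γ
  | _, .vz => a
  | _, .vs w => .var w

def subst1 {Γ σ τ} (a : Tm S Γ σ) (b : Tm S (σ :: Γ) τ) : Tm S Γ τ :=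
  subst (Sub.single a) b

/-- Weakening of a closed term into any context. -/
def Ren.fromEmpty {Γ} : Ren [] Γ := fun _ v => nomatch v

def wk0 {Γ τ} (t : Tm S [] τ) : Tm S Γ τ :=
  rename Ren.fromEmpty t

/-- The equation `s =^τ t`. -/
def eqT {Γ} (τ : Ty) (s t : Tm S Γ τ) : Tm S Γ o :=
  .app (.app (.eq τ) s) t

/-- `⊤ := (=^o) =^{ooo} (=^o)`. -/
def topT {Γ} : Tm S Γ o :=
  eqT (arr o (arr o o)) (.eq o) (.eq o)

/-- `⊥ := (λP:o. P) =^{oo} (λP:o. ⊤)`. -/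
def botT {Γ} : Tm S Γ o :=
  eqT (arr o o) (.lam (.var .vz)) (.lam topT)

/-- `¬ := λP:o. P =^o ⊥`. -/
def notC {Γ} : Tm S Γ (arr o o) :=
  .lam (eqT o (.var .vz) botT)

/-- `¬ s`. -/
def negT {Γ} (s : Tm S Γ o) : Tm S Γ o :=
  .app notC s

/-- `∧ := λP Q. (λF:ooo. F ⊤ ⊤) =^{o(ooo)} (λF. F P Q)`. -/
def andC {Γ} : Tm S Γ (arr o (arr o o)) :=
  .lam (.lam (eqT (arr (arr o (arr o o)) o)
    (.lam (.app (.app (.var .vz) topT) topT))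
    (.lam (.app (.app (.var .vz) (.var (.vs (.vs .vz)))) (.var (.vs .vz))))))

/-- `∨ := λP Q. ¬(¬P ∧ ¬Q)`. -/
def orC {Γ} : Tm S Γ (arr o (arr o o)) :=
  .lam (.lam (negT (.app (.app andC (negT (.var (.vs .vz)))) (negT (.var .vz)))))

/-- `⇒ := λP Q. ¬P ∨ Q`. -/
def impC {Γ} : Tm S Γ (arr o (arr o o)) :=
  .lam (.lam (.app (.app orC (negT (.var (.vs .vz)))) (.var .vz)))

/-- `Π^τ := λP:oτ. P =^{oτ} (λX:τ. ⊤)`. -/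
def piC {Γ} (τ : Ty) : Tm S Γ (arr (arr τ o) o) :=
  .lam (eqT (arr τ o) (.var .vz) (.lam topT))

/-- Leibniz equality `s ≐ t := Π^{oτ} (λP:oτ. (P s) ⇒ (P t))`. -/
def leibT {Γ τ} (s t : Tm S Γ τ) : Tm S Γ o :=
  .app (piC (arr τ o))
    (.lam (.app (.app impC (.app (.var .vz) (rename (fun _ v => Var.vs v) s)))
                (.app (.var .vz) (rename (fun _ v => Var.vs v) t))))

/-- βη-conversion. -/
inductive Conv : ∀ {Γ : List Ty} {τ : Ty}, Tm S Γ τ → Tm S Γ τ → Prop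
  | refl {Γ τ} (s : Tm S Γ τ) : Conv s s
  | symm {Γ τ} {s t : Tm S Γ τ} : Conv s t → Conv t s
  | trans {Γ τ} {s t u : Tm S Γ τ} : Conv s t → Conv t u → Conv s u
  | appCongr {Γ a b} {f f' : Tm S Γ (arr a b)} {s s' : Tm S Γ a} :
      Conv f f' → Conv s s' → Conv (.app f s) (.app f' s')
  | lamCongr {Γ a b} {s s' : Tm S (a :: Γ) b} :
      Conv s s' → Conv (.lam s) (.lam s')
  | beta {Γ a b} (body : Tm S (a :: Γ) b) (s : Tm S Γ a) :
      Conv (.app (.lam body) s) (subst1 s body)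
  | eta {Γ a b} (f : Tm S Γ (arr a b)) :
      Conv (.lam (.app (rename (fun _ v => Var.vs v) f) (.var .vz))) f

/-- Atomic formulas: head symbol is a parameter (or a variable). -/
inductive Atomic : ∀ {Γ : List Ty} {τ : Ty}, Tm S Γ τ → Prop
  | par {Γ τ} (p : S τ) : Atomic (Tm.par (Γ := Γ) p)
  | var {Γ τ} (v : Var Γ τ) : Atomic (Tm.var (S := S) v)
  | app {Γ a b} {f : Tm S Γ (arr a b)} {s : Tm S Γ a} : Atomic f → Atomic (.app f s)

/-- Paired spines of closed arguments, for the decomposition property `∇_d`: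
a value of `Spine2 S σ τ` is a list of pairs `(sⁱ, tⁱ)` of closed terms turning a head
of type `σ` into two applications `h s¹ … sⁿ` and `h t¹ … tⁿ` of type `τ`. -/
inductive Spine2 (S : Ty → Type) : Ty → Ty → Type
  | nil {τ} : Spine2 S τ τ
  | cons {a σ τ} (s t : Tm S [] a) (rest : Spine2 S σ τ) : Spine2 S (arr a σ) τ

def appSpineL : ∀ {σ τ}, Tm S [] σ → Spine2 S σ τ → Tm S [] τ
  | _, _, h, .nil => h
  | _, _, h, .cons s _ rest => appSpineL (.app h s) rest

def appSpineR : ∀ {σ τ}, Tm S [] σ → Spine2 S σ τ → Tm S [] τ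
  | _, _, h, .nil => h
  | _, _, h, .cons _ t rest => appSpineR (.app h t) rest

/-- `∃ i, (sⁱ ≠ tⁱ) ∈ H` for a paired spine. -/
def ExistsNeq (H : Set (Tm S [] o)) : ∀ {σ τ}, Spine2 S σ τ → Prop
  | _, _, .nil => False
  | _, _, .cons (a := a) s t rest => negT (eqT a s t) ∈ H ∨ ExistsNeq H rest

/-- Steen's acceptable Hintikka sets: sets of closed formulas (sentences) satisfying
the ten properties `∇_c, ∇_βη, ∇_=^r, ∇_=^s, ∇_b^+, ∇_b^-, ∇_f^+, ∇_f^-, ∇_m, ∇_d`. -/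
structure Acceptable (S : Ty → Type) (H : Set (Tm S [] o)) : Prop where
  nabla_c : ∀ s : Tm S [] o, ¬ (s ∈ H ∧ negT s ∈ H)
  nabla_betaEta : ∀ s t : Tm S [] o, Conv s t → s ∈ H → t ∈ H
  nabla_eq_r : ∀ {τ} (s : Tm S [] τ), negT (eqT τ s s) ∉ H
  nabla_eq_s : ∀ {τ} (u : Tm S [τ] o) (s t : Tm S [] τ),
      subst1 s u ∈ H → eqT τ s t ∈ H → subst1 t u ∈ H
  nabla_b_pos : ∀ s t : Tm S [] o, eqT o s t ∈ H →
      (s ∈ H ∧ t ∈ H) ∨ (negT s ∈ H ∧ negT t ∈ H)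
  nabla_b_neg : ∀ s t : Tm S [] o, negT (eqT o s t) ∈ H →
      (s ∈ H ∧ negT t ∈ H) ∨ (negT s ∈ H ∧ t ∈ H)
  nabla_f_pos : ∀ {a b} (f g : Tm S [] (arr a b)), eqT (arr a b) f g ∈ H →
      ∀ s : Tm S [] a, eqT b (.app f s) (.app g s) ∈ H
  nabla_f_neg : ∀ {a b} (f g : Tm S [] (arr a b)), negT (eqT (arr a b) f g) ∈ H →
      ∃ w : S a, negT (eqT b (.app f (.par w)) (.app g (.par w))) ∈ H
  nabla_m : ∀ s t : Tm S [] o, Atomic s → Atomic t → s ∈ H → negT t ∈ H →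
      negT (eqT o s t) ∈ H
  nabla_d : ∀ {σ τ} (h : Tm S [] σ) (sp : Spine2 S σ τ),
      negT (eqT τ (appSpineL h sp) (appSpineR h sp)) ∈ H → ExistsNeq H sp

/-- `H` is saturated iff `s ∈ H` or `¬s ∈ H` for every closed formula `s`. -/
def Saturated (H : Set (Tm S [] o)) : Prop :=
  ∀ s : Tm S [] o, s ∈ H ∨ negT s ∈ H

variable {S : Ty → Type} {H : Set (Tm S [] Ty.o)}

/-- If `(Π^τ F) ∈ H`, then `(F s) ∈ H` for every closed term `s` of type `τ`. -/
theorem pi_mem (hH : Acceptable S H) {τ : Ty} (F : Tm S [] (Ty.arr τ Ty.o))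
    (h : Tm.app (piC τ) F ∈ H) : ∀ s : Tm S [] τ, Tm.app F s ∈ H := by
  intro s
  have h1 : eqT (Ty.arr τ Ty.o) F (.lam topT) ∈ H :=
    hH.nabla_betaEta _ _ (Conv.beta (eqT (Ty.arr τ Ty.o) (.var .vz) (.lam topT)) F) h
  have h2 := hH.nabla_f_pos F (.lam topT) h1 s
  rcases hH.nabla_b_pos _ _ h2 with ⟨hFs, _⟩ | ⟨_, hneg⟩
  · exact hFs
  · exfalso
    have h3 : negT (topT : Tm S [] Ty.o) ∈ H :=
      hH.nabla_betaEta _ _ (Conv.appCongr (Conv.refl notC) (Conv.beta topT s)) hneg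
    exact hH.nabla_eq_r _ h3

end HintikkaHOL
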